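/- Let M be a connected real-analytic manifold and let 𝓕 be an admissible sheaf of local vector fields on M which is real-analytic and analytically determined. Assume that every p ∈ M admits an open connected neighborhood 𝒱_p with the following property: for every q ∈ 𝒱_p and every 𝓕-germ 𝔤 ∈ 𝔊^𝓕_q, there exists a real-analytic vector field X ∈ 𝔛^ω(𝒱_p) whose germ at q (i.e., the equivalence class of vector fields agreeing with X on some connected open neighborhood of q) equals 𝔤. Then 𝓕 is regular. -/

import Mathlib

open Set Manifold Topology

noncomputable section

variable {E : Type*} [NormedAddCommGroup E] [NormedSpace ℝ E]
  {H : Type*} [TopologicalSpace H]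

/-- A (raw) vector field on the manifold `M`, given by a choice of tangent vector at every
point.  A *local* vector field defined on an open set `U ⊆ M` is represented by such a global
assignment, where only the values on `U` are relevant. -/
abbrev VF (I : ModelWithCorners ℝ E H) (M : Type*) [TopologicalSpace M] [ChartedSpace H M] :
    Type _ :=
  (x : M) → TangentSpace I x

variable (I : ModelWithCorners ℝ E H) (M : Type*) [TopologicalSpace M] [ChartedSpace H M]
  [IsManifold I (⊤ : ℕ∞) M]

/-- Smoothness (`C^∞`) of a vector field on a subset `U` of `M`, as smoothness of the
corresponding section of the tangent bundle. -/
def IsSmoothVFOn (X : VF I M) (U : Set M) : Prop :=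
  ContMDiffOn I I.tangent (⊤ : ℕ∞) (fun x => (⟨x, X x⟩ : TangentBundle I M)) U

/-- A sheaf of local vector fields on the manifold `M`: to every connected open set `U ⊆ M` it
assigns a linear subspace `carrier U` of the smooth vector fields on `U` (represented by global
assignments of tangent vectors, two of which describe the same local field on `U` iff they agree
on `U`), closed under restriction to connected open subsets and satisfying the gluing axiom. -/
structure VFSheaf where
  carrier : Set M → Set (VF I M)
  smooth_mem : ∀ U, IsOpen U → IsConnected U → ∀ X ∈ carrier U, IsSmoothVFOn I M X U
  zero_mem : ∀ U, IsOpen U → IsConnected U → (0 : VF I M) ∈ carrier U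
  add_mem : ∀ U, IsOpen U → IsConnected U → ∀ X ∈ carrier U, ∀ Y ∈ carrier U, X + Y ∈ carrier U
  smul_mem : ∀ U, IsOpen U → IsConnected U → ∀ (c : ℝ), ∀ X ∈ carrier U, c • X ∈ carrier U
  congr_mem : ∀ U, IsOpen U → IsConnected U → ∀ X ∈ carrier U, ∀ Y : VF I M,
    (∀ x ∈ U, Y x = X x) → Y ∈ carrier U
  restrict_mem : ∀ U, IsOpen U → IsConnected U → ∀ V, IsOpen V → IsConnected V → V ⊆ U →
    ∀ X ∈ carrier U, X ∈ carrier V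
  glue_mem : ∀ U, IsOpen U → IsConnected U → ∀ S : Set (Set M),
    (∀ V ∈ S, IsOpen V ∧ IsConnected V) → U = ⋃₀ S → ∀ X : VF I M, IsSmoothVFOn I M X U →
    (∀ V ∈ S, X ∈ carrier V) → X ∈ carrier U

variable {I M}

/-- The unique continuation property for a sheaf of local vector fields: a field of the sheaf
on a connected open set vanishing on some non-empty open subset vanishes identically. -/
def VFSheaf.UniqueContinuation (F : VFSheaf I M) : Prop :=
  ∀ U, IsOpen U → IsConnected U → ∀ X ∈ F.carrier U,
    (∃ V : Set M, V.Nonempty ∧ IsOpen V ∧ V ⊆ U ∧ ∀ x ∈ V, X x = 0) → ∀ x ∈ U, X x = 0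

variable (I M) in
/-- Restriction of global tangent-vector assignments to a subset `U`, as a linear map. -/
def resVF (U : Set M) : VF I M →ₗ[ℝ] ((x : U) → TangentSpace I (x : M)) where
  toFun X := fun x => X x
  map_add' _ _ := rfl
  map_smul' _ _ := rfl

/-- The dimension (as a cardinal) of the space `𝓕(U)` of local fields of the sheaf `F` on `U`,
computed as the rank of the space of restrictions to `U` of members of `F.carrier U`. -/
def fdim (F : VFSheaf I M) (U : Set M) : Cardinal :=
  Module.rank ℝ ↥(Submodule.span ℝ (resVF I M U '' F.carrier U))

/-- A sheaf of local vector fields has bounded rank if the dimensions of the spaces `𝓕(U)`,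
`U` connected open, are uniformly bounded. -/
def VFSheaf.BoundedRank (F : VFSheaf I M) : Prop :=
  ∃ N : ℕ, ∀ U : Set M, IsOpen U → IsConnected U → fdim F U ≤ (N : Cardinal)

/-- A sheaf of local vector fields is admissible if it has the unique continuation property
and bounded rank. -/
def VFSheaf.Admissible (F : VFSheaf I M) : Prop :=
  F.UniqueContinuation ∧ F.BoundedRank

/-- `κ^𝓕_p`: the supremum (= maximum) of `dim 𝓕(U)` over connected open neighbourhoods `U`
of `p`. -/
def kappa (F : VFSheaf I M) (p : M) : Cardinal :=
  ⨆ U : {U : Set M // IsOpen U ∧ IsConnected U ∧ p ∈ U}, fdim F (U : Set M)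

/-- A sheaf of local vector fields is regular if `p ↦ κ^𝓕_p` is constant on `M`. -/
def VFSheaf.Regular (F : VFSheaf I M) : Prop :=
  ∀ p q : M, kappa F p = kappa F q

section Germs

variable (I M) in
/-- The subspace of tangent-vector assignments vanishing on some connected open neighbourhood
of `p`; the quotient by this subspace is the space of germs at `p`. -/
def germNull [LocallyConnectedSpace M] (p : M) : Submodule ℝ (VF I M) where
  carrier := {X | ∃ V : Set M, IsOpen V ∧ IsConnected V ∧ p ∈ V ∧ ∀ x ∈ V, X x = 0}
  zero_mem' :=
    ⟨connectedComponentIn univ p, isOpen_univ.connectedComponentIn,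
      isConnected_connectedComponentIn_iff.mpr (mem_univ p),
      mem_connectedComponentIn (mem_univ p), fun _ _ => rfl⟩
  add_mem' := by
    rintro X Y ⟨V₁, hV₁o, hV₁c, hpV₁, hX⟩ ⟨V₂, hV₂o, hV₂c, hpV₂, hY⟩
    refine ⟨connectedComponentIn (V₁ ∩ V₂) p, (hV₁o.inter hV₂o).connectedComponentIn,
      isConnected_connectedComponentIn_iff.mpr ⟨hpV₁, hpV₂⟩,
      mem_connectedComponentIn ⟨hpV₁, hpV₂⟩, fun x hx => ?_⟩
    have hx' := connectedComponentIn_subset (V₁ ∩ V₂) p hx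
    show X x + Y x = 0
    rw [hX x hx'.1, hY x hx'.2, add_zero]
  smul_mem' := by
    rintro c X ⟨V, hVo, hVc, hpV, hX⟩
    exact ⟨V, hVo, hVc, hpV, fun x hx => by show c • X x = 0; rw [hX x hx, smul_zero]⟩

variable (I M) in
/-- The space of germs at `p` of (arbitrary) local vector fields on `M`. -/
abbrev GermSpace [LocallyConnectedSpace M] (p : M) : Type _ :=
  VF I M ⧸ germNull I M p

variable (I M) in
/-- The germ at `p` of a local vector field, as a linear map. -/
def germAt [LocallyConnectedSpace M] (p : M) : VF I M →ₗ[ℝ] GermSpace I M p :=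
  (germNull I M p).mkQ

/-- `𝔊^𝓕_p`: the space of germs at `p` of local `𝓕`-fields of the sheaf `F`, i.e. germs at `p`
of fields `K ∈ 𝓕(U)` with `U` a connected open neighbourhood of `p`. -/
def stalk [LocallyConnectedSpace M] (F : VFSheaf I M) (p : M) :
    Submodule ℝ (GermSpace I M p) :=
  Submodule.span ℝ {g | ∃ U : Set M, ∃ X : VF I M,
    IsOpen U ∧ IsConnected U ∧ p ∈ U ∧ X ∈ F.carrier U ∧ g = germAt I M p X}

/-- A connected open set `U ∋ p` is `𝓕`-special for `p` if the (linear) germ map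
`𝓕(U) → 𝔊^𝓕_p` is a linear isomorphism, i.e. it is injective (fields in `𝓕(U)` with the same
germ at `p` agree on `U`) and surjective onto the space of `𝓕`-germs at `p`. -/
def IsSpecial [LocallyConnectedSpace M] (F : VFSheaf I M) (U : Set M) (p : M) : Prop :=
  IsOpen U ∧ IsConnected U ∧ p ∈ U ∧
    (∀ K₁ ∈ F.carrier U, ∀ K₂ ∈ F.carrier U,
      germAt I M p K₁ = germAt I M p K₂ → ∀ x ∈ U, K₁ x = K₂ x) ∧
    (∀ g ∈ stalk F p, ∃ K ∈ F.carrier U, germAt I M p K = g)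

/-- A transport of `𝓕`-germs along the curve `γ : [a,b] → M`: a family of germs
`g t ∈ 𝔊^𝓕_{γ t}` which is locally induced by a single local field of the sheaf `F`. -/
def IsTransport [LocallyConnectedSpace M] (F : VFSheaf I M) (a b : ℝ) (γ : ℝ → M)
    (g : (t : ℝ) → GermSpace I M (γ t)) : Prop :=
  ∀ t₀ ∈ Icc a b, ∃ ε > (0 : ℝ), ∃ U : Set M, ∃ K : VF I M,
    IsOpen U ∧ IsConnected U ∧ K ∈ F.carrier U ∧
    ∀ t ∈ Ioo (t₀ - ε) (t₀ + ε) ∩ Icc a b, γ t ∈ U ∧ g t = germAt I M (γ t) K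

end Germs

section Analytic

variable {E₁ : Type*} [NormedAddCommGroup E₁] [NormedSpace ℝ E₁]
  {H₁ : Type*} [TopologicalSpace H₁]
  {E₂ : Type*} [NormedAddCommGroup E₂] [NormedSpace ℝ E₂]
  {H₂ : Type*} [TopologicalSpace H₂]

variable (I₁ : ModelWithCorners ℝ E₁ H₁) (I₂ : ModelWithCorners ℝ E₂ H₂)

/-- Real-analyticity, on a set `U`, of a map between charted spaces: around every point of `U`
the map, read in the preferred extended charts, is real-analytic (within the chart image
of `U`). -/
def MAnalyticOn {M₁ : Type*} [TopologicalSpace M₁] [ChartedSpace H₁ M₁]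
    {M₂ : Type*} [TopologicalSpace M₂] [ChartedSpace H₂ M₂]
    (f : M₁ → M₂) (U : Set M₁) : Prop :=
  ∀ x ∈ U, AnalyticWithinAt ℝ (writtenInExtChartAt I₁ I₂ x f)
    ((extChartAt I₁ x).symm ⁻¹' U ∩ Set.range I₁) (extChartAt I₁ x x)

variable {I₁} in
/-- A real-analytic vector field on `U ⊆ M`: the associated section of the tangent bundle is
real-analytic on `U`. -/
def AnalyticVFOn {M₁ : Type*} [TopologicalSpace M₁] [ChartedSpace H₁ M₁]
    [IsManifold I₁ (⊤ : ℕ∞) M₁] (X : VF I₁ M₁) (U : Set M₁) : Prop :=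
  MAnalyticOn I₁ I₁.tangent (fun x => (⟨x, X x⟩ : TangentBundle I₁ M₁)) U

end Analytic

section AnalyticallyDetermined

variable [IsManifold I (⊤ : ℕ∞) M]

/-- A sheaf of local vector fields is real-analytic if all its local fields are real-analytic
vector fields. -/
def VFSheaf.RealAnalytic (F : VFSheaf I M) : Prop :=
  ∀ U : Set M, IsOpen U → IsConnected U → ∀ X ∈ F.carrier U, AnalyticVFOn X U

/-- A real-analytic sheaf `𝓕` is analytically determined if for every open set `U` there is a
collection `𝓐 U` of maps sending real-analytic vector fields on `U` to real-analytic functions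
`U → ℝ` (depending only on the values of the field on `U`), such that (a) the restriction to an
open subset `V ⊆ U` of `Fn X`, `Fn ∈ 𝓐 U`, is realized by some member of `𝓐 V`, and (b) a
real-analytic vector field `X` on a connected open set `U` belongs to `𝓕(U)` if and only if
`Fn X` vanishes identically on `U` for all `Fn ∈ 𝓐 U`. -/
def VFSheaf.AnalyticallyDetermined (F : VFSheaf I M) : Prop :=
  ∃ 𝓐 : Set M → Set (VF I M → M → ℝ),
    (∀ U : Set M, IsOpen U → ∀ Fn ∈ 𝓐 U, ∀ X : VF I M, AnalyticVFOn X U →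
      MAnalyticOn I (𝓘(ℝ, ℝ)) (Fn X) U ∧
      ∀ Y : VF I M, AnalyticVFOn Y U → (∀ x ∈ U, X x = Y x) → ∀ x ∈ U, Fn X x = Fn Y x) ∧
    (∀ U V : Set M, IsOpen U → IsOpen V → V ⊆ U → ∀ Fn ∈ 𝓐 U,
      ∀ X : VF I M, AnalyticVFOn X U → ∃ Gn ∈ 𝓐 V, ∀ x ∈ V, Fn X x = Gn X x) ∧
    (∀ U : Set M, IsOpen U → IsConnected U → ∀ X : VF I M, AnalyticVFOn X U →
      (X ∈ F.carrier U ↔ ∀ Fn ∈ 𝓐 U, ∀ x ∈ U, Fn X x = 0))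

end AnalyticallyDetermined

/-- The old Mathlib `AnalyticManifold` (removed since): the chart changes are analytic, i.e. the
manifold has the groupoid `analyticGroupoid I`, read in `E` through `I` on `I.symm ⁻¹' s ∩ range I`. -/
class AnalyticManifold {𝕜 : Type*} [NontriviallyNormedField 𝕜] {E : Type*} [NormedAddCommGroup E]
    [NormedSpace 𝕜 E] {H : Type*} [TopologicalSpace H] (I : ModelWithCorners 𝕜 E H)
    (M : Type*) [TopologicalSpace M] [ChartedSpace H M] : Prop where
  compatible : ∀ {e e' : OpenPartialHomeomorph M H}, e ∈ atlas H M → e' ∈ atlas H M →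
    AnalyticOn 𝕜 (I ∘ (e.symm ≫ₕ e') ∘ I.symm) (I.symm ⁻¹' (e.symm ≫ₕ e').source ∩ range I)

/-!
Fix `p` and the neighbourhood `𝒱 = 𝒱_p`; we show `κ_q = dim 𝓕(𝒱)` for every `q ∈ 𝒱`, so that
`κ` is locally constant, hence constant on the connected manifold `M`. Given a connected open
`U ∋ q`, pick a connected open `W ∋ q` inside `U ∩ 𝒱`. Restriction `𝓕(U) → 𝓕(W)` is injective by
unique continuation. Restriction `𝓕(𝒱) → 𝓕(W)` is surjective: the germ at `q` of `K ∈ 𝓕(W)` is the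
germ of some real-analytic `X` on `𝒱`; for every `F ∈ 𝓐(𝒱)` the analytic function `F^X` vanishes
near `q` (there `X` is a field of `𝓕`), hence on all of `𝒱` by the identity theorem, so `X ∈ 𝓕(𝒱)`,
and `X = K` on `W` by unique continuation again. Thus `dim 𝓕(U) ≤ dim 𝓕(W) ≤ dim 𝓕(𝒱)`.
-/

open Filter

theorem AnalyticAt.eventuallyEq_zero_of_eventuallyEq_zero_nhdsWithin
    {𝕜 : Type*} [NontriviallyNormedField 𝕜] [CharZero 𝕜]
    {E F : Type*} [NormedAddCommGroup E] [NormedSpace 𝕜 E] [NormedAddCommGroup F]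
    [NormedSpace 𝕜 F] [CompleteSpace F] {g : E → F} {s : Set E} {y : E}
    (hg : AnalyticAt 𝕜 g y) (hs : UniqueDiffOn 𝕜 s) (hy : y ∈ s) (h : g =ᶠ[𝓝[s] y] 0) :
    g =ᶠ[𝓝 y] 0 := by
  obtain ⟨t, ht, hyt, hgt⟩ := mem_nhdsWithin.mp h
  have hderiv (n : ℕ) : iteratedFDeriv 𝕜 n g y = 0 := by
    have hzero : EqOn g (fun _ => 0) (s ∩ t) := fun z hz => hgt ⟨hz.2, hz.1⟩
    rw [← iteratedFDerivWithin_eq_iteratedFDeriv (hs.inter ht) hg.contDiffAt ⟨hy, hyt⟩,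
      iteratedFDerivWithin_congr hzero ⟨hy, hyt⟩, iteratedFDerivWithin_fun_zero, Pi.zero_apply]
  obtain ⟨p, r, hp⟩ := hg
  filter_upwards [Metric.eball_mem_nhds y hp.r_pos] with z hz
  have hsum := hp.hasSum_iteratedFDeriv (y := z - y)
    (by rwa [Metric.mem_eball, edist_zero_right, ← edist_eq_enorm_sub])
  simp only [hderiv, zero_apply, smul_zero, add_sub_cancel] at hsum
  exact hsum.unique hasSum_zero

theorem MAnalyticOn.mono {E₁ H₁ E₂ H₂ : Type*} [NormedAddCommGroup E₁] [NormedSpace ℝ E₁]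
    [TopologicalSpace H₁] [NormedAddCommGroup E₂] [NormedSpace ℝ E₂] [TopologicalSpace H₂]
    {I₁ : ModelWithCorners ℝ E₁ H₁} {I₂ : ModelWithCorners ℝ E₂ H₂} {M₁ M₂ : Type*}
    [TopologicalSpace M₁] [ChartedSpace H₁ M₁] [TopologicalSpace M₂] [ChartedSpace H₂ M₂]
    {f : M₁ → M₂} {U V : Set M₁} (hf : MAnalyticOn I₁ I₂ f U) (hVU : V ⊆ U) :
    MAnalyticOn I₁ I₂ f V :=
  fun x hx => (hf x (hVU hx)).mono (inter_subset_inter_left _ (preimage_mono hVU))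

section IdentityTheorem

variable {M : Type*} [TopologicalSpace M] [ChartedSpace H M]
  {F : Type*} [NormedAddCommGroup F] [NormedSpace ℝ F]

theorem MAnalyticOn.analyticWithinAt_range {f : M → F} {U : Set M}
    (hf : MAnalyticOn I 𝓘(ℝ, F) f U) (hU : IsOpen U) {x : M} (hx : x ∈ U) :
    AnalyticWithinAt ℝ (f ∘ (extChartAt I x).symm) (range I) (extChartAt I x x) := by
  have hmem : (extChartAt I x).symm ⁻¹' U ∩ range I ∈ 𝓝[range I] extChartAt I x x := by
    rw [inter_comm]
    exact inter_mem_nhdsWithin _ (extChartAt_preimage_mem_nhds (hU.mem_nhds hx))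
  have h := (hf x hx).mono_of_mem_nhdsWithin hmem
  rwa [writtenInExtChartAt, extChartAt_model_space_eq_id, PartialEquiv.refl_coe,
    Function.id_comp] at h

theorem eventuallyEq_zero_of_mem_closure_of_analyticWithinAt [CompleteSpace F] {f : M → F} {x : M}
    (hf : AnalyticWithinAt ℝ (f ∘ (extChartAt I x).symm) (range I) (extChartAt I x x))
    (hx : x ∈ closure {z | f =ᶠ[𝓝 z] 0}) : f =ᶠ[𝓝 x] 0 := by
  set φ := extChartAt I x
  obtain ⟨g, hfg, hg⟩ := analyticWithinAt_iff_exists_analyticAt.mp hf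
  rw [insert_eq_of_mem (extChartAt_target_subset_range x (mem_extChartAt_target x)),
    EventuallyEq, eventually_nhdsWithin_iff] at hfg
  obtain ⟨r, hr, hball⟩ := Metric.eventually_nhds_iff_ball.mp (hg.eventually_analyticAt.and hfg)
  set B := Metric.ball (φ x) r
  have hnhds : φ.source ∩ φ ⁻¹' B ∈ 𝓝 x := inter_mem (extChartAt_source_mem_nhds x)
    ((continuousAt_extChartAt x).preimage_mem_nhds (Metric.ball_mem_nhds _ hr))
  obtain ⟨x', ⟨hx'src, hx'B⟩, hx'S : f =ᶠ[𝓝 x'] 0⟩ := mem_closure_iff_nhds.mp hx _ hnhds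
  have hgx' : g =ᶠ[𝓝 (φ x')] 0 := by
    refine (hball _ hx'B).1.eventuallyEq_zero_of_eventuallyEq_zero_nhdsWithin I.uniqueDiffOn
      (extChartAt_target_subset_range x (φ.map_source hx'src)) ?_
    have hfx' : ∀ᶠ w in 𝓝[range I] φ x', f (φ.symm w) = 0 := by
      rw [EventuallyEq, ← map_extChartAt_symm_nhdsWithin_range' hx'src] at hx'S
      exact hx'S
    filter_upwards [hfx', nhdsWithin_le_nhds (Metric.isOpen_ball.mem_nhds hx'B),
      self_mem_nhdsWithin] with w hw hwB hwI
    exact ((hball w hwB).2 hwI).symm.trans hw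
  have hgan : AnalyticOnNhd ℝ g B := fun w hw => (hball w hw).1
  have hgB : EqOn g 0 B := hgan.eqOn_zero_of_preconnected_of_eventuallyEq_zero
    (convex_ball _ _).isPreconnected hx'B hgx'
  show ∀ᶠ z in 𝓝 x, f z = 0
  rw [← map_extChartAt_symm_nhdsWithin_range (I := I) x, eventually_map]
  filter_upwards [nhdsWithin_le_nhds (Metric.ball_mem_nhds _ hr), self_mem_nhdsWithin]
    with w hwB hwI
  exact ((hball w hwB).2 hwI).trans (hgB hwB)

theorem MAnalyticOn.eqOn_zero_of_isPreconnected [CompleteSpace F] {f : M → F} {U : Set M}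
    (hf : MAnalyticOn I 𝓘(ℝ, F) f U) (hUo : IsOpen U) (hU : IsPreconnected U) {x₀ : M}
    (hx₀ : x₀ ∈ U) (hfx₀ : f =ᶠ[𝓝 x₀] 0) : EqOn f 0 U := by
  have hUS : U ⊆ {z | f =ᶠ[𝓝 z] 0} :=
    hU.subset_of_closure_inter_subset isOpen_setOfPred_eventually_nhds ⟨x₀, hx₀, hfx₀⟩
      fun x hx => eventuallyEq_zero_of_mem_closure_of_analyticWithinAt (hf.analyticWithinAt_range hUo hx.2) hx.1
  exact fun x hx => (hUS hx).eq_of_nhds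

end IdentityTheorem

section Sheaf

variable {F : VFSheaf I M} {U V : Set M} {X Y : VF I M}

theorem VFSheaf.sub_mem (hUo : IsOpen U) (hUc : IsConnected U) (hX : X ∈ F.carrier U)
    (hY : Y ∈ F.carrier U) : X - Y ∈ F.carrier U := by
  have h := F.add_mem U hUo hUc X hX _ (F.smul_mem U hUo hUc (-1) Y hY)
  rwa [neg_one_smul, ← sub_eq_add_neg] at h

theorem VFSheaf.UniqueContinuation.eq_of_eq_on_open (hF : F.UniqueContinuation)
    (hUo : IsOpen U) (hUc : IsConnected U) (hX : X ∈ F.carrier U) (hY : Y ∈ F.carrier U)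
    (hVo : IsOpen V) (hVne : V.Nonempty) (hVU : V ⊆ U) (hXY : ∀ x ∈ V, X x = Y x) :
    ∀ x ∈ U, X x = Y x := by
  have h := hF U hUo hUc (X - Y) (F.sub_mem hUo hUc hX hY)
    ⟨V, hVne, hVo, hVU, fun x hx => sub_eq_zero.mpr (hXY x hx)⟩
  exact fun x hx => sub_eq_zero.mp (h x hx)

theorem VFSheaf.exists_mem_carrier_of_mem_span (hUo : IsOpen U) (hUc : IsConnected U)
    {f : (x : U) → TangentSpace I (x : M)}
    (hf : f ∈ Submodule.span ℝ (resVF I M U '' F.carrier U)) :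
    ∃ X ∈ F.carrier U, resVF I M U X = f := by
  induction hf using Submodule.span_induction with
  | mem f hf => exact hf
  | zero => exact ⟨0, F.zero_mem U hUo hUc, map_zero _⟩
  | add f g _ _ hf hg =>
    obtain ⟨X, hX, rfl⟩ := hf
    obtain ⟨Y, hY, rfl⟩ := hg
    exact ⟨X + Y, F.add_mem U hUo hUc X hX Y hY, map_add _ _ _⟩
  | smul c f _ hf =>
    obtain ⟨X, hX, rfl⟩ := hf
    exact ⟨c • X, F.smul_mem U hUo hUc c X hX, map_smul _ _ _⟩

variable (F) in
def VFSheaf.restrictSpan (hUo : IsOpen U) (hUc : IsConnected U) (hVo : IsOpen V)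
    (hVc : IsConnected V) (hVU : V ⊆ U) :
    Submodule.span ℝ (resVF I M U '' F.carrier U) →ₗ[ℝ]
      Submodule.span ℝ (resVF I M V '' F.carrier V) where
  toFun f := ⟨fun x => f.1 ⟨x, hVU x.2⟩, by
    obtain ⟨X, hX, hXf⟩ := F.exists_mem_carrier_of_mem_span hUo hUc f.2
    exact Submodule.subset_span
      ⟨X, F.restrict_mem U hUo hUc V hVo hVc hVU X hX, by rw [← hXf]; rfl⟩⟩
  map_add' _ _ := rfl
  map_smul' _ _ := rfl

theorem fdim_le_of_subset (hF : F.UniqueContinuation) (hUo : IsOpen U) (hUc : IsConnected U)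
    (hVo : IsOpen V) (hVc : IsConnected V) (hVU : V ⊆ U) : fdim F U ≤ fdim F V := by
  refine LinearMap.rank_le_of_injective (F.restrictSpan hUo hUc hVo hVc hVU) fun f g hfg => ?_
  obtain ⟨X, hX, hXf⟩ := F.exists_mem_carrier_of_mem_span hUo hUc f.2
  obtain ⟨Y, hY, hYg⟩ := F.exists_mem_carrier_of_mem_span hUo hUc g.2
  have hXY := hF.eq_of_eq_on_open hUo hUc hX hY hVo hVc.nonempty hVU fun x hx => by
    have h := congr_fun (congr_arg Subtype.val hfg) ⟨x, hx⟩
    change f.1 ⟨x, hVU hx⟩ = g.1 ⟨x, hVU hx⟩ at h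
    rwa [← hXf, ← hYg] at h
  ext x
  rw [← hXf, ← hYg]
  exact hXY x x.2

theorem fdim_le_of_forall_extends (hUo : IsOpen U) (hUc : IsConnected U) (hVo : IsOpen V)
    (hVc : IsConnected V) (hVU : V ⊆ U)
    (hext : ∀ X ∈ F.carrier V, ∃ K ∈ F.carrier U, ∀ x ∈ V, K x = X x) :
    fdim F V ≤ fdim F U := by
  refine LinearMap.rank_le_of_surjective (F.restrictSpan hUo hUc hVo hVc hVU) fun f => ?_
  obtain ⟨X, hX, hXf⟩ := F.exists_mem_carrier_of_mem_span hVo hVc f.2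
  obtain ⟨K, hK, hKX⟩ := hext X hX
  refine ⟨⟨resVF I M U K, Submodule.subset_span ⟨K, hK, rfl⟩⟩, ?_⟩
  ext x
  rw [← hXf]
  exact hKX x x.2

theorem kappa_eq_of_forall_fdim_le {p : M} (hVo : IsOpen V) (hVc : IsConnected V) (hpV : p ∈ V)
    (h : ∀ U, IsOpen U → IsConnected U → p ∈ U → fdim F U ≤ fdim F V) :
    kappa F p = fdim F V :=
  le_antisymm (ciSup_le' fun U => h U U.2.1 U.2.2.1 U.2.2.2)
    (le_ciSup Cardinal.bddAbove_of_small
      (⟨V, hVo, hVc, hpV⟩ : {U : Set M // IsOpen U ∧ IsConnected U ∧ p ∈ U}))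

end Sheaf

section AnalyticContinuation

variable {F : VFSheaf I M} {U V : Set M} {X : VF I M}

theorem VFSheaf.AnalyticallyDetermined.mem_carrier_of_mem_carrier_subset
    (hF : F.AnalyticallyDetermined) (hUo : IsOpen U) (hUc : IsConnected U) (hVo : IsOpen V)
    (hVc : IsConnected V) (hVU : V ⊆ U) (hX : AnalyticVFOn X U) (hXV : X ∈ F.carrier V) :
    X ∈ F.carrier U := by
  obtain ⟨𝓐, h𝓐an, h𝓐res, h𝓐mem⟩ := hF
  rw [h𝓐mem U hUo hUc X hX]
  intro Fn hFn
  obtain ⟨Gn, hGn, hFG⟩ := h𝓐res U V hUo hVo hVU Fn hFn X hX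
  have hzero : ∀ x ∈ V, Fn X x = 0 := fun x hx =>
    (hFG x hx).trans ((h𝓐mem V hVo hVc X (hX.mono hVU)).mp hXV Gn hGn x hx)
  obtain ⟨q, hq⟩ := hVc.nonempty
  exact fun x hx => (h𝓐an U hUo Fn hFn X hX).1.eqOn_zero_of_isPreconnected hUo
    hUc.isPreconnected (hVU hq) (eventually_of_mem (hVo.mem_nhds hq) hzero) hx

variable [LocallyConnectedSpace M]

variable (F) in
def AnalyticallyExtendsGerms (V : Set M) : Prop :=
  ∀ q ∈ V, ∀ g ∈ stalk F q, ∃ X : VF I M, AnalyticVFOn X V ∧ germAt I M q X = g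

theorem exists_extension_of_analyticallyExtendsGerms (hUC : F.UniqueContinuation)
    (had : F.AnalyticallyDetermined) (hVo : IsOpen V) (hVc : IsConnected V)
    (hV : AnalyticallyExtendsGerms F V) (hUo : IsOpen U) (hUc : IsConnected U) (hUV : U ⊆ V)
    (hX : X ∈ F.carrier U) : ∃ K ∈ F.carrier V, ∀ x ∈ U, K x = X x := by
  obtain ⟨q, hqU⟩ := hUc.nonempty
  obtain ⟨K, hKan, hKX⟩ := hV q (hUV hqU) _ (Submodule.subset_span ⟨U, X, hUo, hUc, hqU, hX, rfl⟩)
  -- `germAt q` is the quotient map by `germNull q`, so `K - X` vanishes near `q`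
  obtain ⟨N, hNo, -, hqN, hN⟩ := (Submodule.Quotient.eq _).mp hKX
  obtain ⟨W, ⟨hWo, hqW, hWc⟩, hWNU⟩ := (LocallyConnectedSpace.open_connected_basis q).mem_iff.mp
    ((hNo.inter hUo).mem_nhds ⟨hqN, hqU⟩)
  have hKW : K ∈ F.carrier W :=
    F.congr_mem W hWo hWc X (F.restrict_mem U hUo hUc W hWo hWc (fun x hx => (hWNU hx).2) X hX) K
      fun x hx => sub_eq_zero.mp (hN x (hWNU hx).1)
  have hKV : K ∈ F.carrier V := had.mem_carrier_of_mem_carrier_subset hVo hVc hWo hWc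
    (fun x hx => hUV (hWNU hx).2) hKan hKW
  exact ⟨K, hKV, hUC.eq_of_eq_on_open hUo hUc (F.restrict_mem V hVo hVc U hUo hUc hUV K hKV) hX
    hWo ⟨q, hqW⟩ (fun x hx => (hWNU hx).2) fun x hx => sub_eq_zero.mp (hN x (hWNU hx).1)⟩

theorem kappa_eq_fdim_of_analyticallyExtendsGerms (hUC : F.UniqueContinuation)
    (had : F.AnalyticallyDetermined) (hVo : IsOpen V) (hVc : IsConnected V)
    (hV : AnalyticallyExtendsGerms F V) {q : M} (hq : q ∈ V) : kappa F q = fdim F V := by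
  refine kappa_eq_of_forall_fdim_le hVo hVc hq fun U hUo hUc hqU => ?_
  obtain ⟨W, ⟨hWo, hqW, hWc⟩, hWUV⟩ := (LocallyConnectedSpace.open_connected_basis q).mem_iff.mp
    ((hUo.inter hVo).mem_nhds ⟨hqU, hq⟩)
  calc fdim F U ≤ fdim F W := fdim_le_of_subset hUC hUo hUc hWo hWc fun x hx => (hWUV hx).1
    _ ≤ fdim F V := fdim_le_of_forall_extends hVo hVc hWo hWc (fun x hx => (hWUV hx).2)
      fun X hX => exists_extension_of_analyticallyExtendsGerms hUC had hVo hVc hV hWo hWc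
        (fun x hx => (hWUV hx).2) hX

end AnalyticContinuation

theorem statement13_general [LocallyConnectedSpace M] [ConnectedSpace M]
    (F : VFSheaf I M) (hF : F.Admissible)
    (had : F.AnalyticallyDetermined)
    (hext : ∀ p : M, ∃ Vp : Set M, IsOpen Vp ∧ IsConnected Vp ∧ p ∈ Vp ∧
      ∀ q ∈ Vp, ∀ g ∈ stalk F q, ∃ X : VF I M,
        AnalyticVFOn X Vp ∧ germAt I M q X = g) :
    F.Regular := by
  have hlc : IsLocallyConstant (kappa F) := by
    refine (IsLocallyConstant.iff_exists_open _).mpr fun p => ?_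
    obtain ⟨V, hVo, hVc, hpV, hV⟩ := hext p
    have hκ : ∀ q ∈ V, kappa F q = fdim F V := fun _ =>
      kappa_eq_fdim_of_analyticallyExtendsGerms hF.1 had hVo hVc hV
    exact ⟨V, hVo, hpV, fun q hq => (hκ q hq).trans (hκ p hpV).symm⟩
  exact hlc.apply_eq_of_preconnectedSpace

/-- Let `M` be a connected real-analytic manifold and `𝓕` an admissible,
real-analytic, analytically determined sheaf of local vector fields.  If every point `p ∈ M`
has an open connected neighbourhood `𝒱_p` such that every `𝓕`-germ at every point `q ∈ 𝒱_p`
is the germ of a real-analytic vector field defined on all of `𝒱_p`, then `𝓕` is regular. -/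
theorem statement13 [AnalyticManifold I M] [LocallyConnectedSpace M] [ConnectedSpace M]
    (F : VFSheaf I M) (hF : F.Admissible)
    (hra : F.RealAnalytic) (had : F.AnalyticallyDetermined)
    (hext : ∀ p : M, ∃ Vp : Set M, IsOpen Vp ∧ IsConnected Vp ∧ p ∈ Vp ∧
      ∀ q ∈ Vp, ∀ g ∈ stalk F q, ∃ X : VF I M,
        AnalyticVFOn X Vp ∧ germAt I M q X = g) :
    F.Regular :=
  statement13_general F hF had hext
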